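/- Let d ≥ 1 and λ ∈ [0,1). Let (X_n) be the biased random walk RW_λ on ℤ^d with transition probabilities p(v,u) = λ/(d_v + (λ−1)d_v^−) if |u| = |v|−1 and v ≠ 0, p(v,u) = 1/(d_v + (λ−1)d_v^−) if |u| = |v|+1 or (|u| = |v|), and p(0,u) = 1/(2d), where d_v = 2d and d_v^− = d − #{i : v_i = 0}. Then for every nearest-neighbor path γ = γ_0γ_1⋯γ_n from 0 to k ∈ ℤ^d, the path probability p(γ) = ∏_{j} p(γ_{j−1}, γ_j) satisfies p(γ) ≤ (1/(d(1+λ)))^{(n+|k|)/2} · (λ/(d(1+λ)))^{(n−|k|)/2}. -/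

import Mathlib

open scoped Classical in
/-- Transition probability of the biased random walk `RW_λ` on `ℤ^d`
(for nearest-neighbor pairs `v`, `u`): `λ/(2d+(λ-1)d_v^-)` for steps
decreasing the ℓ¹ norm, `1/(2d+(λ-1)d_v^-)` otherwise, where
`d_v^- = d - #{i : v_i = 0}`. -/
noncomputable def ptrans (d : ℕ) (lam : ℝ) (v u : Fin d → ℤ) : ℝ :=
  if (∑ i, |u i|) < (∑ i, |v i|) then
    lam / (2 * d + (lam - 1) * ((d : ℝ) - (Finset.univ.filter (fun i => v i = 0)).card))
  else
    1 / (2 * d + (lam - 1) * ((d : ℝ) - (Finset.univ.filter (fun i => v i = 0)).card))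

/-!
Each step of a nearest-neighbour path changes the ℓ¹ norm by exactly `±1` (by the triangle
inequality it changes by at most `1`, and `|x|` has the parity of `x`), so a path from `0` to `k`
of length `n = m₁ + m₂` has `m₁` norm-increasing and `m₂` norm-decreasing steps. Writing the
denominator of `ptrans` as `d + c + (d - c)λ` with `c = #{i : v i = 0}`, it is at least
`d (1 + λ)` since `λ ≤ 1`, which bounds every factor of the path probability.
-/

open Finset

section NearestNeighbourSteps

variable {ι : Type*}

theorem Int.even_abs_sub_self (x : ℤ) : Even (|x| - x) :=
  Int.even_sub.2 even_abs

theorem Int.even_sum_abs_sub_sum (s : Finset ι) (u : ι → ℤ) :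
    Even (∑ i ∈ s, |u i| - ∑ i ∈ s, u i) := by
  rw [← sum_sub_distrib]
  exact even_sum _ fun i _ ↦ Int.even_abs_sub_self (u i)

theorem abs_sum_abs_sub_sum_abs_eq_one [Fintype ι] {u v : ι → ℤ}
    (h : ∑ i, |u i - v i| = 1) : |(∑ i, |u i|) - (∑ i, |v i|)| = 1 := by
  have hle : |(∑ i, |u i|) - (∑ i, |v i|)| ≤ 1 :=
    calc |(∑ i, |u i|) - (∑ i, |v i|)|
        = |∑ i, (|u i| - |v i|)| := by rw [sum_sub_distrib]
      _ ≤ ∑ i, |(|u i| - |v i|)| := abs_sum_le_sum_abs _ _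
      _ ≤ ∑ i, |u i - v i| := sum_le_sum fun i _ ↦ abs_abs_sub_abs_le_abs_sub _ _
      _ = 1 := h
  have hu := Int.even_sum_abs_sub_sum univ u
  have hv := Int.even_sum_abs_sub_sum univ v
  have huv := Int.even_sum_abs_sub_sum univ (u - v)
  simp only [Pi.sub_apply, h, sum_sub_distrib] at huv
  obtain ⟨a, ha⟩ := hu
  obtain ⟨b, hb⟩ := hv
  obtain ⟨c, hc⟩ := huv
  rw [abs_le] at hle
  rw [abs_eq zero_le_one]
  omega

theorem card_filter_not_lt_sub_card_filter_lt {S : ℕ → ℤ} {n : ℕ}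
    (hS : ∀ j < n, |S (j + 1) - S j| = 1) :
    (#{j ∈ range n | ¬ S (j + 1) < S j} : ℤ) - #{j ∈ range n | S (j + 1) < S j} = S n - S 0 := by
  have hstep : ∀ j ∈ range n, S (j + 1) - S j = if S (j + 1) < S j then -1 else 1 := by
    intro j hj
    have := abs_eq (zero_le_one' ℤ) |>.1 (hS j (mem_range.1 hj))
    split_ifs <;> omega
  rw [← sum_range_sub, sum_congr rfl hstep, sum_ite, sum_const, sum_const]
  simp only [smul_neg, nsmul_eq_mul, mul_one]
  ring

end NearestNeighbourSteps

theorem Finset.prod_le_pow_card_filter_mul_pow_card_filter_not {α : Type*} {s : Finset α}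
    {f : α → ℝ} (p : α → Prop) [DecidablePred p] {a b : ℝ} (hf : ∀ i ∈ s, 0 ≤ f i)
    (ha : ∀ i ∈ s, p i → f i ≤ a) (hb : ∀ i ∈ s, ¬ p i → f i ≤ b) :
    ∏ i ∈ s, f i ≤ a ^ #{i ∈ s | p i} * b ^ #{i ∈ s | ¬ p i} := by
  calc ∏ i ∈ s, f i ≤ ∏ i ∈ s, if p i then a else b :=
        prod_le_prod hf fun i hi ↦ by split_ifs with h <;> [exact ha i hi h; exact hb i hi h]
    _ = a ^ #{i ∈ s | p i} * b ^ #{i ∈ s | ¬ p i} := by rw [prod_ite, prod_const, prod_const]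

section TransitionBounds

variable {d : ℕ} {lam : ℝ}

theorem mul_one_add_le_two_mul_add (c : ℝ) (hc : 0 ≤ c) (h1 : lam ≤ 1) :
    (d : ℝ) * (1 + lam) ≤ 2 * d + (lam - 1) * (d - c) := by
  nlinarith

theorem ptrans_le (hd : 0 < d) (h0 : 0 ≤ lam) (h1 : lam ≤ 1) (v u : Fin d → ℤ) :
    ptrans d lam v u ≤ (if (∑ i, |u i|) < (∑ i, |v i|) then lam else 1) / (d * (1 + lam)) := by
  have hpos : (0 : ℝ) < d * (1 + lam) := by positivity
  have hden := mul_one_add_le_two_mul_add (d := d) (#{i | v i = 0} : ℝ) (Nat.cast_nonneg _) h1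
  unfold ptrans
  split_ifs
  · exact div_le_div_of_nonneg_left h0 hpos hden
  · exact div_le_div_of_nonneg_left zero_le_one hpos hden

theorem ptrans_nonneg (hd : 0 < d) (h0 : 0 ≤ lam) (h1 : lam ≤ 1) (v u : Fin d → ℤ) :
    0 ≤ ptrans d lam v u := by
  have hpos : (0 : ℝ) < d * (1 + lam) := by positivity
  have hden := mul_one_add_le_two_mul_add (d := d) (#{i | v i = 0} : ℝ) (Nat.cast_nonneg _) h1
  unfold ptrans
  split_ifs <;> exact div_nonneg (by positivity) (hpos.trans_le hden).le

end TransitionBounds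

theorem stmt14 (d : ℕ) (hd : 1 ≤ d) (lam : ℝ) (h0 : 0 ≤ lam) (h1 : lam < 1)
    (n : ℕ) (k : Fin d → ℤ) (γ : ℕ → Fin d → ℤ)
    (hstart : γ 0 = 0) (hend : γ n = k)
    (hstep : ∀ j < n, (∑ i, |γ (j + 1) i - γ j i|) = 1)
    (m₁ m₂ : ℕ) (hm : m₁ + m₂ = n) (hk : (m₁ : ℤ) = (m₂ : ℤ) + ∑ i, |k i|) :
    (∏ j ∈ Finset.range n, ptrans d lam (γ j) (γ (j + 1)))
      ≤ (1 / (d * (1 + lam))) ^ m₁ * (lam / (d * (1 + lam))) ^ m₂ := by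
  set S : ℕ → ℤ := fun j ↦ ∑ i, |γ j i|
  have hcount := card_filter_not_lt_sub_card_filter_lt (S := S) (n := n)
    fun j hj ↦ abs_sum_abs_sub_sum_abs_eq_one (hstep j hj)
  have hcard := card_filter_add_card_filter_not (s := range n) (fun j ↦ S (j + 1) < S j)
  have hS₀ : S 0 = 0 := by simp [S, hstart]
  have hSₙ : S n = ∑ i, |k i| := by simp [S, hend]
  rw [hS₀, hSₙ, sub_zero] at hcount
  rw [card_range] at hcard
  have hm₁ : m₁ = #{j ∈ range n | ¬ S (j + 1) < S j} := by omega
  have hm₂ : m₂ = #{j ∈ range n | S (j + 1) < S j} := by omega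
  rw [hm₁, hm₂, mul_comm]
  apply prod_le_pow_card_filter_mul_pow_card_filter_not _
    (fun j _ ↦ ptrans_nonneg hd h0 h1.le _ _)
  · intro j _ hlt
    simpa [S, hlt] using ptrans_le hd h0 h1.le (γ j) (γ (j + 1))
  · intro j _ hlt
    simpa [S, hlt] using ptrans_le hd h0 h1.le (γ j) (γ (j + 1))
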